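/- arXiv:1512.04353 — 4 statements merged into one kernel-verified Lean document; each statement's English description precedes it below -/
import Mathlib

section
/- Let R = ⊕_{i≥0} R_i be an ℕ-graded ring and r ∈ R_k (k ≥ 1) a central element that is not a zero-divisor. Then the two-sided ideal generated by r - 1 intersects each homogeneous component R_d trivially: (r-1) ∩ R_d = 0 for all d ∈ ℕ. -/
/-!
Write `x = y * r - y`. If `y ≠ 0`, let `m` and `n` be the largest and smallest degrees in which
`y` has a nonzero component. Since `r` is homogeneous of degree `k ≥ 1`, the component of `x` in
degree `m + k` is `yₘ * r`, nonzero as `r` is not a zero divisor, while its component in degree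
`n` is `-yₙ ≠ 0`. A homogeneous `x` cannot have nonzero components in the two distinct degrees
`n < m + k`, so `y = 0`.
-/

open DirectSum

theorem DirectSum.eq_of_mem_of_decompose_ne_zero {ι M σ : Type*} [DecidableEq ι]
    [AddCommMonoid M] [SetLike σ M] [AddSubmonoidClass σ M] (ℳ : ι → σ) [Decomposition ℳ]
    {x : M} {d i : ι} (hx : x ∈ ℳ d) (h : (decompose ℳ x i : M) ≠ 0) : i = d :=
  by_contra fun hid => h (decompose_of_mem_ne ℳ hx (Ne.symm hid))

namespace GradedRing

variable {A : Type*} [Ring A] (𝒜 : ℕ → AddSubgroup A) [GradedRing 𝒜] {k : ℕ} {r y : A}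

theorem coe_decompose_mul_sub_self_add_of_right_mem (hr : r ∈ 𝒜 k) {i : ℕ}
    (hy : (decompose 𝒜 y (i + k) : A) = 0) :
    (decompose 𝒜 (y * r - y) (i + k) : A) = decompose 𝒜 y i * r := by
  rw [decompose_sub, DirectSum.sub_apply, AddSubgroup.coe_sub, coe_decompose_mul_add_of_right_mem 𝒜 hr,
    hy, sub_zero]

theorem coe_decompose_mul_sub_self_of_right_mem (hr : r ∈ 𝒜 k) (hk : 1 ≤ k) {n : ℕ}
    (hy : ∀ j < n, (decompose 𝒜 y j : A) = 0) :
    (decompose 𝒜 (y * r - y) n : A) = -decompose 𝒜 y n := by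
  have hyr : (decompose 𝒜 (y * r) n : A) = 0 := by
    classical
    rw [coe_decompose_mul_of_right_mem 𝒜 n hr]
    split_ifs with hkn
    · rw [hy (n - k) (by omega), zero_mul]
    · rfl
  rw [decompose_sub, DirectSum.sub_apply, AddSubgroup.coe_sub, hyr, zero_sub]

theorem eq_zero_of_mul_sub_self_mem (hk : 1 ≤ k) (hr : r ∈ 𝒜 k)
    (hr' : r ∈ nonZeroDivisorsRight A) {d : ℕ} (h : y * r - y ∈ 𝒜 d) : y = 0 := by
  classical
  by_contra hy
  have hs : (decompose 𝒜 y).support.Nonempty := by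
    rw [Finset.nonempty_iff_ne_empty, Ne, DFinsupp.support_eq_empty, ← decompose_zero 𝒜,
      (decompose 𝒜).injective.eq_iff]
    exact hy
  set m := (decompose 𝒜 y).support.max' hs
  set n := (decompose 𝒜 y).support.min' hs
  have hcoe : ∀ i, (decompose 𝒜 y i : A) = 0 ↔ i ∉ (decompose 𝒜 y).support := fun i => by
    rw [DFinsupp.notMem_support_iff, ZeroMemClass.coe_eq_zero]
  have htop : m + k = d := by
    refine eq_of_mem_of_decompose_ne_zero 𝒜 h ?_
    have habove : (decompose 𝒜 y (m + k) : A) = 0 :=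
      (hcoe _).2 fun hmem => by have := Finset.le_max' _ _ hmem; omega
    rw [coe_decompose_mul_sub_self_add_of_right_mem 𝒜 hr habove]
    exact fun hzero => (hcoe m).1 (hr' _ hzero) (Finset.max'_mem _ hs)
  have hbot : n = d := by
    refine eq_of_mem_of_decompose_ne_zero 𝒜 h ?_
    have hbelow : ∀ j < n, (decompose 𝒜 y j : A) = 0 :=
      fun j hj => (hcoe j).2 fun hmem => by have := Finset.min'_le _ _ hmem; omega
    rw [coe_decompose_mul_sub_self_of_right_mem 𝒜 hr hk hbelow, neg_ne_zero]
    exact fun hzero => (hcoe n).1 hzero (Finset.min'_mem _ hs)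
  have := Finset.min'_le_max' _ hs
  omega

end GradedRing

theorem graded_central_nzd_ideal_meets_components_trivially_general
    {A : Type*} [Ring A] (𝒜 : ℕ → AddSubgroup A) [GradedRing 𝒜]
    (k : ℕ) (hk : 1 ≤ k) (r : A) (hr : r ∈ 𝒜 k)
    (hnzd : r ∈ nonZeroDivisors A)
    (d : ℕ) (x : A) (hx : x ∈ 𝒜 d) (hmem : ∃ y : A, x = y * (r - 1)) :
    x = 0 := by
  obtain ⟨y, rfl⟩ := hmem
  rw [mul_sub_one] at hx ⊢
  rw [GradedRing.eq_zero_of_mul_sub_self_mem 𝒜 hk hr hnzd.2 hx, zero_mul, sub_zero]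

/-- Let `R = ⊕_{i≥0} R_i` be an ℕ-graded ring and `r ∈ R_k` (`k ≥ 1`) a central element
that is not a zero-divisor.  Then the two-sided ideal generated by `r - 1` (which, as `r - 1`
is central, consists of the elements `y * (r - 1)`) intersects each homogeneous component
`R_d` trivially. -/
theorem graded_central_nzd_ideal_meets_components_trivially
    {A : Type*} [Ring A] (𝒜 : ℕ → AddSubgroup A) [GradedRing 𝒜]
    (k : ℕ) (hk : 1 ≤ k) (r : A) (hr : r ∈ 𝒜 k)
    (hcentral : ∀ x : A, r * x = x * r)
    (hnzd : r ∈ nonZeroDivisors A)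
    (d : ℕ) (x : A) (hx : x ∈ 𝒜 d) (hmem : ∃ y : A, x = y * (r - 1)) :
    x = 0 :=
  graded_central_nzd_ideal_meets_components_trivially_general 𝒜 k hk r hr hnzd d x hx hmem
end

section
/- In O_q(SL_2(ℂ)) with q ∈ ℂ^× not a root of unity, the commutator of the quantum trace with a basis monomial satisfies: [a + d, a^i b^k c^l] = (1 − q^{−(k+l)}) a^{i+1} b^k c^l + (1 − q^{k+l}) a^{i−1} b^k c^l + (q^{−2(i−1)−1} − q^{k+l+1}) a^{i−1} b^{k+1} c^{l+1}, for all integers i ≥ 1 and k, l ≥ 0. -/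
/-- Defining relations of `O_q(SL_2(ℂ))` on generators `a, b, c, d` (indexed by `Fin 4`):
`ab = q·ba`, `ac = q·ca`, `bd = q·db`, `cd = q·dc`, `bc = cb`,
`ad − da = (q − q⁻¹)·bc`, `ad − q·bc = 1`. -/
inductive SL2Rel (q : ℂ) : FreeAlgebra ℂ (Fin 4) → FreeAlgebra ℂ (Fin 4) → Prop
  | ab : SL2Rel q (FreeAlgebra.ι ℂ 0 * FreeAlgebra.ι ℂ 1)
      (q • (FreeAlgebra.ι ℂ 1 * FreeAlgebra.ι ℂ 0))
  | ac : SL2Rel q (FreeAlgebra.ι ℂ 0 * FreeAlgebra.ι ℂ 2)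
      (q • (FreeAlgebra.ι ℂ 2 * FreeAlgebra.ι ℂ 0))
  | bd : SL2Rel q (FreeAlgebra.ι ℂ 1 * FreeAlgebra.ι ℂ 3)
      (q • (FreeAlgebra.ι ℂ 3 * FreeAlgebra.ι ℂ 1))
  | cd : SL2Rel q (FreeAlgebra.ι ℂ 2 * FreeAlgebra.ι ℂ 3)
      (q • (FreeAlgebra.ι ℂ 3 * FreeAlgebra.ι ℂ 2))
  | bc : SL2Rel q (FreeAlgebra.ι ℂ 1 * FreeAlgebra.ι ℂ 2)
      (FreeAlgebra.ι ℂ 2 * FreeAlgebra.ι ℂ 1)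
  | ad : SL2Rel q (FreeAlgebra.ι ℂ 0 * FreeAlgebra.ι ℂ 3)
      (FreeAlgebra.ι ℂ 3 * FreeAlgebra.ι ℂ 0
        + (q - q⁻¹) • (FreeAlgebra.ι ℂ 1 * FreeAlgebra.ι ℂ 2))
  | det : SL2Rel q (FreeAlgebra.ι ℂ 0 * FreeAlgebra.ι ℂ 3
        - q • (FreeAlgebra.ι ℂ 1 * FreeAlgebra.ι ℂ 2)) 1

/-- The quantized coordinate ring `O_q(SL_2(ℂ))`. -/
abbrev OqSL2 (q : ℂ) := RingQuot (SL2Rel q)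

noncomputable def SL2a (q : ℂ) : OqSL2 q := RingQuot.mkAlgHom ℂ (SL2Rel q) (FreeAlgebra.ι ℂ 0)
noncomputable def SL2b (q : ℂ) : OqSL2 q := RingQuot.mkAlgHom ℂ (SL2Rel q) (FreeAlgebra.ι ℂ 1)
noncomputable def SL2c (q : ℂ) : OqSL2 q := RingQuot.mkAlgHom ℂ (SL2Rel q) (FreeAlgebra.ι ℂ 2)
noncomputable def SL2d (q : ℂ) : OqSL2 q := RingQuot.mkAlgHom ℂ (SL2Rel q) (FreeAlgebra.ι ℂ 3)

/-!
Write the monomial as `aⁱ β` with `β = bᵏcˡ`. Moving `a` and `d` past `β` only costs the scalars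
`q^{-(k+l)}` and `q^{k+l}`, so `[a + d, aⁱβ]` reduces to `a^{i+1}β`, `d aⁱ β` and `aⁱ d β`.
The last two are computed from `da = 1 + q⁻¹bc` and `ad = 1 + q bc`, after moving `bc` past
`a^{i-1}` at the cost of `q^{-2(i-1)}`.
-/

section TwistedCommutation

variable {K R : Type*} [CommSemiring K] [Semiring R] [Algebra K R] {s t : K} {x y z : R}

lemma pow_mul_eq_smul_mul_pow (h : y * x = s • (x * y)) :
    ∀ n : ℕ, y ^ n * x = s ^ n • (x * y ^ n)
  | 0 => by simp
  | n + 1 => by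
    rw [pow_succ, mul_assoc, h, mul_smul_comm, ← mul_assoc, pow_mul_eq_smul_mul_pow h n,
      smul_mul_assoc, smul_smul, mul_assoc, ← pow_succ, ← pow_succ']

lemma mul_pow_eq_smul_pow_mul (h : y * x = s • (x * y)) :
    ∀ n : ℕ, y * x ^ n = s ^ n • (x ^ n * y)
  | 0 => by simp
  | n + 1 => by
    rw [pow_succ, ← mul_assoc, mul_pow_eq_smul_pow_mul h n, smul_mul_assoc, mul_assoc, h,
      mul_smul_comm, smul_smul, ← mul_assoc, ← pow_succ, pow_succ']

lemma mul_mul_eq_smul_mul_mul (hy : y * x = s • (x * y)) (hz : z * x = t • (x * z)) :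
    y * z * x = (s * t) • (x * (y * z)) := by
  rw [mul_assoc, hz, mul_smul_comm, ← mul_assoc, hy, smul_mul_assoc, smul_smul, mul_comm s,
    mul_assoc]

end TwistedCommutation

lemma commutator_add_pow_succ_mul {K R : Type*} [CommRing K] [Ring R] [Algebra K R]
    {a d e β : R} {s t r u v : K}
    (hβa : β * a = s • (a * β)) (hβd : β * d = t • (d * β)) (hea : e * a = r • (a * e))
    (hda : d * a = 1 + u • e) (had : a * d = 1 + v • e) (n : ℕ) :
    (a + d) * (a ^ (n + 1) * β) - a ^ (n + 1) * β * (a + d) =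
      (1 - s) • (a ^ (n + 2) * β) + (1 - t) • (a ^ n * β)
        + (u * r ^ n - t * v) • (a ^ n * (e * β)) := by
  have ha_left : a * (a ^ (n + 1) * β) = a ^ (n + 2) * β := by
    rw [← mul_assoc, ← pow_succ']
  have hd_left : d * (a ^ (n + 1) * β) = a ^ n * β + (u * r ^ n) • (a ^ n * (e * β)) := by
    rw [pow_succ', ← mul_assoc, ← mul_assoc, hda, add_mul, one_mul, smul_mul_assoc,
      mul_pow_eq_smul_pow_mul hea]
    simp only [add_mul, smul_mul_assoc, smul_smul, mul_assoc]
  have ha_right : a ^ (n + 1) * β * a = s • (a ^ (n + 2) * β) := by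
    rw [mul_assoc, hβa, mul_smul_comm, ← mul_assoc, ← pow_succ]
  have hd_right : a ^ (n + 1) * β * d = t • (a ^ n * β) + (t * v) • (a ^ n * (e * β)) := by
    rw [mul_assoc, hβd, mul_smul_comm, ← mul_assoc, pow_succ, mul_assoc _ a d, had, mul_add,
      mul_one, add_mul, mul_smul_comm, smul_mul_assoc, smul_add, smul_smul, mul_assoc]
  rw [mul_add, add_mul, ha_left, hd_left, ha_right, hd_right]
  module

namespace OqSL2

variable (q : ℂ)

lemma a_mul_b : SL2a q * SL2b q = q • (SL2b q * SL2a q) := by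
  simpa [SL2a, SL2b] using RingQuot.mkAlgHom_rel ℂ (SL2Rel.ab (q := q))

lemma a_mul_c : SL2a q * SL2c q = q • (SL2c q * SL2a q) := by
  simpa [SL2a, SL2c] using RingQuot.mkAlgHom_rel ℂ (SL2Rel.ac (q := q))

lemma b_mul_d : SL2b q * SL2d q = q • (SL2d q * SL2b q) := by
  simpa [SL2b, SL2d] using RingQuot.mkAlgHom_rel ℂ (SL2Rel.bd (q := q))

lemma c_mul_d : SL2c q * SL2d q = q • (SL2d q * SL2c q) := by
  simpa [SL2c, SL2d] using RingQuot.mkAlgHom_rel ℂ (SL2Rel.cd (q := q))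

lemma b_mul_c : SL2b q * SL2c q = SL2c q * SL2b q := by
  simpa [SL2b, SL2c] using RingQuot.mkAlgHom_rel ℂ (SL2Rel.bc (q := q))

lemma a_mul_d_sub_d_mul_a :
    SL2a q * SL2d q - SL2d q * SL2a q = (q - q⁻¹) • (SL2b q * SL2c q) := by
  rw [sub_eq_iff_eq_add']
  simpa [SL2a, SL2b, SL2c, SL2d] using RingQuot.mkAlgHom_rel ℂ (SL2Rel.ad (q := q))

lemma a_mul_d : SL2a q * SL2d q = 1 + q • (SL2b q * SL2c q) := by
  rw [← sub_eq_iff_eq_add]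
  simpa [SL2a, SL2b, SL2c, SL2d] using RingQuot.mkAlgHom_rel ℂ (SL2Rel.det (q := q))

lemma d_mul_a : SL2d q * SL2a q = 1 + q⁻¹ • (SL2b q * SL2c q) := by
  linear_combination (norm := module) a_mul_d q - a_mul_d_sub_d_mul_a q

variable {q}

lemma b_mul_a (hq : q ≠ 0) : SL2b q * SL2a q = q⁻¹ • (SL2a q * SL2b q) := by
  rw [a_mul_b, smul_smul, inv_mul_cancel₀ hq, one_smul]

lemma c_mul_a (hq : q ≠ 0) : SL2c q * SL2a q = q⁻¹ • (SL2a q * SL2c q) := by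
  rw [a_mul_c, smul_smul, inv_mul_cancel₀ hq, one_smul]

lemma pow_mul_pow_mul_a (hq : q ≠ 0) (k l : ℕ) :
    SL2b q ^ k * SL2c q ^ l * SL2a q =
      (q⁻¹ ^ k * q⁻¹ ^ l) • (SL2a q * (SL2b q ^ k * SL2c q ^ l)) :=
  mul_mul_eq_smul_mul_mul (pow_mul_eq_smul_mul_pow (b_mul_a hq) k)
    (pow_mul_eq_smul_mul_pow (c_mul_a hq) l)

lemma pow_mul_pow_mul_d (k l : ℕ) :
    SL2b q ^ k * SL2c q ^ l * SL2d q = (q ^ k * q ^ l) • (SL2d q * (SL2b q ^ k * SL2c q ^ l)) :=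
  mul_mul_eq_smul_mul_mul (pow_mul_eq_smul_mul_pow (b_mul_d q) k)
    (pow_mul_eq_smul_mul_pow (c_mul_d q) l)

lemma b_mul_c_mul_a (hq : q ≠ 0) :
    SL2b q * SL2c q * SL2a q = (q⁻¹ * q⁻¹) • (SL2a q * (SL2b q * SL2c q)) :=
  mul_mul_eq_smul_mul_mul (b_mul_a hq) (c_mul_a hq)

lemma b_mul_c_mul_pow_mul_pow (k l : ℕ) :
    SL2b q * SL2c q * (SL2b q ^ k * SL2c q ^ l) = SL2b q ^ (k + 1) * SL2c q ^ (l + 1) := by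
  have hcb : SL2c q * SL2b q ^ k = SL2b q ^ k * SL2c q :=
    (Commute.pow_right (b_mul_c q).symm k).eq
  rw [pow_succ', pow_succ', mul_assoc, ← mul_assoc (SL2c q), hcb, mul_assoc, ← mul_assoc (SL2b q)]

end OqSL2

theorem commutator_trace_with_basis_monomial_general (q : ℂ) (hq0 : q ≠ 0)
    (i k l : ℕ) (hi : 1 ≤ i) :
    let a := SL2a q; let b := SL2b q; let c := SL2c q; let d := SL2d q
    (a + d) * (a ^ i * b ^ k * c ^ l) - (a ^ i * b ^ k * c ^ l) * (a + d) =
      (1 - q ^ (-((k : ℤ) + l))) • (a ^ (i + 1) * b ^ k * c ^ l)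
        + (1 - q ^ ((k : ℤ) + l)) • (a ^ (i - 1) * b ^ k * c ^ l)
        + (q ^ (-2 * ((i : ℤ) - 1) - 1) - q ^ ((k : ℤ) + l + 1)) •
            (a ^ (i - 1) * b ^ (k + 1) * c ^ (l + 1)) := by
  intro a b c d
  obtain ⟨n, rfl⟩ : ∃ n, i = n + 1 := ⟨i - 1, by omega⟩
  have h := commutator_add_pow_succ_mul (OqSL2.pow_mul_pow_mul_a hq0 k l)
    (OqSL2.pow_mul_pow_mul_d k l) (OqSL2.b_mul_c_mul_a hq0) (OqSL2.d_mul_a q) (OqSL2.a_mul_d q) n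
  rw [OqSL2.b_mul_c_mul_pow_mul_pow] at h
  simp only [mul_assoc, Nat.add_sub_cancel] at h ⊢
  have hs : q ^ (-((k : ℤ) + l)) = q⁻¹ ^ k * q⁻¹ ^ l := by
    rw [zpow_neg, zpow_add₀ hq0, zpow_natCast, zpow_natCast, mul_inv, inv_pow, inv_pow]
  have ht : q ^ ((k : ℤ) + l) = q ^ k * q ^ l := by
    rw [zpow_add₀ hq0, zpow_natCast, zpow_natCast]
  have hu : q ^ (-2 * (((n + 1 : ℕ) : ℤ) - 1) - 1) = q⁻¹ * (q⁻¹ * q⁻¹) ^ n := by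
    rw [show -2 * (((n + 1 : ℕ) : ℤ) - 1) - 1 = -((2 * n + 1 : ℕ) : ℤ) by push_cast; ring,
      zpow_neg, zpow_natCast, ← inv_pow, pow_succ', pow_mul, sq]
  have hv : q ^ ((k : ℤ) + l + 1) = q ^ k * (q ^ l * q) := by
    rw [zpow_add_one₀ hq0, ht, mul_assoc]
  rw [hs, ht, hu, hv]
  exact h

/-- In `O_q(SL_2(ℂ))` with `q` not a root of unity, for all `i ≥ 1` and `k, l ≥ 0`:
`[a + d, aⁱbᵏcˡ] = (1 − q^{−(k+l)}) a^{i+1}bᵏcˡ + (1 − q^{k+l}) a^{i−1}bᵏcˡ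
  + (q^{−2(i−1)−1} − q^{k+l+1}) a^{i−1}b^{k+1}c^{l+1}`. -/
theorem commutator_trace_with_basis_monomial (q : ℂ) (hq0 : q ≠ 0)
    (hq : ∀ m : ℕ, m ≠ 0 → q ^ m ≠ 1) (i k l : ℕ) (hi : 1 ≤ i) :
    let a := SL2a q; let b := SL2b q; let c := SL2c q; let d := SL2d q
    (a + d) * (a ^ i * b ^ k * c ^ l) - (a ^ i * b ^ k * c ^ l) * (a + d) =
      (1 - q ^ (-((k : ℤ) + l))) • (a ^ (i + 1) * b ^ k * c ^ l)
        + (1 - q ^ ((k : ℤ) + l)) • (a ^ (i - 1) * b ^ k * c ^ l)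
        + (q ^ (-2 * ((i : ℤ) - 1) - 1) - q ^ ((k : ℤ) + l + 1)) •
            (a ^ (i - 1) * b ^ (k + 1) * c ^ (l + 1)) :=
  commutator_trace_with_basis_monomial_general q hq0 i k l hi
end

section
/- In O_q(SL_2(ℂ)), for any k, l ∈ ℕ the commutator [a + d, b^k c^l] equals (1 − q^{−(k+l)}) a b^k c^l + (q^{−(k+l)} − 1) b^k c^l d. In particular, b^k c^l commutes with a + d if and only if k + l = 0 (when q is not a root of unity) or a b^k c^l = b^k c^l d. -/
lemma OqSL2.key1 {R : Type*} [Ring R] [Algebra ℂ R] (q : ℂ) (x y : R)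
    (h : x * y = q • (y * x)) : ∀ n : ℕ, x * y ^ n = (q ^ n) • (y ^ n * x) := by
  intro n
  induction n with
  | zero => simp
  | succ n ih =>
    rw [pow_succ, ← mul_assoc, ih, smul_mul_assoc, mul_assoc, h, mul_smul_comm,
      smul_smul, pow_succ, ← mul_assoc]

lemma OqSL2.key2 {R : Type*} [Ring R] [Algebra ℂ R] (q : ℂ) (x y : R)
    (h : x * y = q • (y * x)) : ∀ n : ℕ, x ^ n * y = (q ^ n) • (y * x ^ n) := by
  intro n
  induction n with
  | zero => simp
  | succ n ih =>
    rw [pow_succ, mul_assoc, h, mul_smul_comm, ← mul_assoc, ih, smul_mul_assoc,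
      smul_smul, pow_succ, mul_assoc, mul_comm (q ^ n) q]

/-- In `O_q(SL_2(ℂ))`, for any `k, l ∈ ℕ`:
`[a + d, bᵏcˡ] = (1 − q^{−(k+l)}) a bᵏcˡ + (q^{−(k+l)} − 1) bᵏcˡ d`.
In particular, when `q` is not a root of unity, `bᵏcˡ` commutes with `a + d`
if and only if `k + l = 0` or `a bᵏcˡ = bᵏcˡ d`. -/
theorem commutator_trace_with_bc_monomial (q : ℂ) (hq0 : q ≠ 0) (k l : ℕ) :
    let a := SL2a q; let b := SL2b q; let c := SL2c q; let d := SL2d q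
    ((a + d) * (b ^ k * c ^ l) - (b ^ k * c ^ l) * (a + d) =
      (1 - q ^ (-((k : ℤ) + l))) • (a * (b ^ k * c ^ l))
        + (q ^ (-((k : ℤ) + l)) - 1) • (b ^ k * c ^ l * d)) ∧
    ((∀ m : ℕ, m ≠ 0 → q ^ m ≠ 1) →
      ((a + d) * (b ^ k * c ^ l) = (b ^ k * c ^ l) * (a + d) ↔
        k + l = 0 ∨ a * (b ^ k * c ^ l) = b ^ k * c ^ l * d)) := by
  intro a b c d
  set t : ℂ := q ^ (-((k : ℤ) + l)) with htdef
  have hqk : (q : ℂ) ^ k ≠ 0 := pow_ne_zero _ hq0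
  have hql : (q : ℂ) ^ l ≠ 0 := pow_ne_zero _ hq0
  have ht : ((q : ℂ) ^ k)⁻¹ * ((q : ℂ) ^ l)⁻¹ = t := by
    rw [htdef, ← mul_inv, ← pow_add, ← zpow_natCast q (k + l), ← zpow_neg]
    push_cast
    ring_nf
  have hab : a * b = q • (b * a) := by
    show SL2a q * SL2b q = q • (SL2b q * SL2a q)
    unfold SL2a SL2b
    rw [← map_mul, RingQuot.mkAlgHom_rel ℂ SL2Rel.ab, map_smul, map_mul]
  have hac : a * c = q • (c * a) := by
    show SL2a q * SL2c q = q • (SL2c q * SL2a q)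
    unfold SL2a SL2c
    rw [← map_mul, RingQuot.mkAlgHom_rel ℂ SL2Rel.ac, map_smul, map_mul]
  have hbd : b * d = q • (d * b) := by
    show SL2b q * SL2d q = q • (SL2d q * SL2b q)
    unfold SL2b SL2d
    rw [← map_mul, RingQuot.mkAlgHom_rel ℂ SL2Rel.bd, map_smul, map_mul]
  have hcd : c * d = q • (d * c) := by
    show SL2c q * SL2d q = q • (SL2d q * SL2c q)
    unfold SL2c SL2d
    rw [← map_mul, RingQuot.mkAlgHom_rel ℂ SL2Rel.cd, map_smul, map_mul]
  -- d * b^k = (q^k)⁻¹ • (b^k * d)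
  have hdb : d * b ^ k = ((q : ℂ) ^ k)⁻¹ • (b ^ k * d) := by
    rw [OqSL2.key2 q b d hbd k, smul_smul, inv_mul_cancel₀ hqk, one_smul]
  have hdc : d * c ^ l = ((q : ℂ) ^ l)⁻¹ • (c ^ l * d) := by
    rw [OqSL2.key2 q c d hcd l, smul_smul, inv_mul_cancel₀ hql, one_smul]
  have hba : b ^ k * a = ((q : ℂ) ^ k)⁻¹ • (a * b ^ k) := by
    rw [OqSL2.key1 q a b hab k, smul_smul, inv_mul_cancel₀ hqk, one_smul]
  have hca : c ^ l * a = ((q : ℂ) ^ l)⁻¹ • (a * c ^ l) := by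
    rw [OqSL2.key1 q a c hac l, smul_smul, inv_mul_cancel₀ hql, one_smul]
  have h1 : d * (b ^ k * c ^ l) = t • (b ^ k * c ^ l * d) := by
    rw [← mul_assoc, hdb, smul_mul_assoc, mul_assoc, hdc, mul_smul_comm,
      smul_smul, ht, ← mul_assoc]
  have h2 : b ^ k * c ^ l * a = t • (a * (b ^ k * c ^ l)) := by
    rw [mul_assoc, hca, mul_smul_comm, ← mul_assoc, hba, smul_mul_assoc,
      smul_smul, mul_comm (((q:ℂ)^l)⁻¹), ht, mul_assoc]
  have hmain : (a + d) * (b ^ k * c ^ l) - (b ^ k * c ^ l) * (a + d) =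
      (1 - t) • (a * (b ^ k * c ^ l)) + (t - 1) • (b ^ k * c ^ l * d) := by
    rw [add_mul, mul_add, h1, h2]
    module
  refine ⟨hmain, fun hroot => ?_⟩
  have ht1 : k + l = 0 → t = 1 := by
    intro h0
    have hk : k = 0 := Nat.eq_zero_of_add_eq_zero_right h0
    have hl : l = 0 := Nat.eq_zero_of_add_eq_zero_left h0
    simp [htdef, hk, hl]
  constructor
  · intro hcomm
    by_cases h0 : k + l = 0
    · exact Or.inl h0
    · right
      have ht' : t = ((q : ℂ) ^ (k + l))⁻¹ := by rw [← ht, pow_add, mul_inv]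
      have hne : (1 : ℂ) - t ≠ 0 := by
        intro h
        apply hroot (k + l) h0
        have htone : t = 1 := (sub_eq_zero.mp h).symm
        rw [ht'] at htone
        exact inv_eq_one.mp htone
      have h4 := hmain
      rw [hcomm, sub_self] at h4
      have hz : (1 - t) • (a * (b ^ k * c ^ l) - b ^ k * c ^ l * d) = 0 := by
        have h5 : (1 - t) • (a * (b ^ k * c ^ l) - b ^ k * c ^ l * d) =
            (1 - t) • (a * (b ^ k * c ^ l)) + (t - 1) • (b ^ k * c ^ l * d) := by
          module
        rw [h5]
        exact h4.symm
      have hiz := congrArg (fun x => (1 - t)⁻¹ • x) hz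
      simp only [smul_smul, inv_mul_cancel₀ hne, one_smul, smul_zero] at hiz
      exact sub_eq_zero.mp hiz
  · intro hor
    apply sub_eq_zero.mp
    rw [hmain]
    rcases hor with h0 | heq
    · rw [ht1 h0]
      module
    · rw [heq]
      module
end

section
/- In O_q(SL_2(ℂ)), for any polynomial p ∈ ℂ[b,c] with homogeneous components p_m of total degree m, the commutator [a + d, p(b,c)] equals a·Σ_m (1 − q^{−m}) p_m(b,c) + Σ_m (q^{−m} − 1) p_m(b,c)·d. In particular, if q is not a root of unity, p(b,c) commutes with a + d if and only if p is constant. -/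
/-- Evaluation of a (commutative) polynomial `p ∈ ℂ[b,c]`, given by its coefficient
function `f : (ℕ × ℕ) →₀ ℂ`, at the commuting elements `b, c` of `O_q(SL_2(ℂ))`. -/
noncomputable def SL2poly (q : ℂ) (f : (ℕ × ℕ) →₀ ℂ) : OqSL2 q :=
  f.sum fun kl coef => coef • (SL2b q ^ kl.1 * SL2c q ^ kl.2)

/-!
Moving `a` (resp. `d`) past a monomial `b^k c^l` multiplies it by `q^(k+l)` (resp. `q^-(k+l)`),
which gives the commutator formula term by term. Writing `P = Σ_m (1 - q^{-m}) p_m`, the formula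
reads `[a + d, p] = a P - P d`. To see that `a P = P d` forces `P = 0`, let `O_q(SL_2)` act on
`ℂ[x, y]`: `b, c` multiply by `x, y`, `a` rescales the degree-`m` part by `q^m`, and `d` is forced
by `ad = 1 + q bc` to be `(1 + q⁻¹xy)` times the rescaling by `q^{-m}`. Applied to `1`, `a P = P d`
becomes `P(qx, qy) = P(x, y)(1 + q⁻¹xy)`, and comparing the coefficients of highest `x`-degree on
the right shows `P = 0`. When `q` is not a root of unity, `1 - q^{-m}` vanishes only for `m = 0`.
-/

theorem mul_pow_eq_smul_pow_mul_s17 {R A : Type*} [CommSemiring R] [Semiring A] [Algebra R A]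
    {x y : A} {t : R} (h : x * y = t • (y * x)) (k : ℕ) : x * y ^ k = t ^ k • (y ^ k * x) := by
  induction k with
  | zero => simp
  | succ n ih =>
    rw [pow_succ, ← mul_assoc, ih, smul_mul_assoc, mul_assoc, h, mul_smul_comm, smul_smul,
      ← pow_succ, ← mul_assoc, ← pow_succ]

theorem mul_pow_mul_pow_eq_smul {R A : Type*} [CommSemiring R] [Semiring A] [Algebra R A]
    {x y z : A} {t : R} (hy : x * y = t • (y * x)) (hz : x * z = t • (z * x)) (k l : ℕ) :
    x * (y ^ k * z ^ l) = t ^ (k + l) • (y ^ k * z ^ l * x) := by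
  rw [← mul_assoc, mul_pow_eq_smul_pow_mul_s17 hy, smul_mul_assoc, mul_assoc,
    mul_pow_eq_smul_pow_mul_s17 hz, mul_smul_comm, smul_smul, ← pow_add, ← mul_assoc]

section Relations

variable (q : ℂ)

theorem SL2a_mul_SL2b : SL2a q * SL2b q = q • (SL2b q * SL2a q) := by
  simpa only [SL2a, SL2b, map_mul, map_smul] using RingQuot.mkAlgHom_rel ℂ (SL2Rel.ab (q := q))

theorem SL2a_mul_SL2c : SL2a q * SL2c q = q • (SL2c q * SL2a q) := by
  simpa only [SL2a, SL2c, map_mul, map_smul] using RingQuot.mkAlgHom_rel ℂ (SL2Rel.ac (q := q))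

theorem SL2d_mul_SL2b (hq : q ≠ 0) : SL2d q * SL2b q = q⁻¹ • (SL2b q * SL2d q) := by
  have hbd : SL2b q * SL2d q = q • (SL2d q * SL2b q) := by
    simpa only [SL2b, SL2d, map_mul, map_smul] using RingQuot.mkAlgHom_rel ℂ (SL2Rel.bd (q := q))
  rw [hbd, smul_smul, inv_mul_cancel₀ hq, one_smul]

theorem SL2d_mul_SL2c (hq : q ≠ 0) : SL2d q * SL2c q = q⁻¹ • (SL2c q * SL2d q) := by
  have hcd : SL2c q * SL2d q = q • (SL2d q * SL2c q) := by
    simpa only [SL2c, SL2d, map_mul, map_smul] using RingQuot.mkAlgHom_rel ℂ (SL2Rel.cd (q := q))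
  rw [hcd, smul_smul, inv_mul_cancel₀ hq, one_smul]

theorem commutator_SL2a_add_SL2d_smul_monomial (hq : q ≠ 0) (k l : ℕ) (r : ℂ) :
    (SL2a q + SL2d q) * (r • (SL2b q ^ k * SL2c q ^ l))
        - r • (SL2b q ^ k * SL2c q ^ l) * (SL2a q + SL2d q) =
      SL2a q * (((1 - q ^ (-((k : ℤ) + l))) * r) • (SL2b q ^ k * SL2c q ^ l))
        + (((q ^ (-((k : ℤ) + l)) - 1) * r) • (SL2b q ^ k * SL2c q ^ l)) * SL2d q := by
  have ha := mul_pow_mul_pow_eq_smul (SL2a_mul_SL2b q) (SL2a_mul_SL2c q) k l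
  have hd := mul_pow_mul_pow_eq_smul (SL2d_mul_SL2b q hq) (SL2d_mul_SL2c q hq) k l
  have hzpow : q ^ (-((k : ℤ) + l)) = q⁻¹ ^ (k + l) := by
    rw [← Nat.cast_add, zpow_neg, zpow_natCast, inv_pow]
  simp only [hzpow, add_mul, mul_add, mul_smul_comm, smul_mul_assoc, ha, hd, inv_pow]
  match_scalars <;> field_simp

theorem commutator_SL2a_add_SL2d_SL2poly (hq : q ≠ 0) (f : (ℕ × ℕ) →₀ ℂ) :
    (SL2a q + SL2d q) * SL2poly q f - SL2poly q f * (SL2a q + SL2d q) =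
      SL2a q * (f.sum fun kl coef =>
          ((1 - q ^ (-((kl.1 : ℤ) + kl.2))) * coef) • (SL2b q ^ kl.1 * SL2c q ^ kl.2))
        + (f.sum fun kl coef =>
          ((q ^ (-((kl.1 : ℤ) + kl.2)) - 1) * coef) • (SL2b q ^ kl.1 * SL2c q ^ kl.2))
          * SL2d q := by
  rw [SL2poly, Finsupp.mul_sum, Finsupp.sum_mul, ← Finsupp.sum_sub, Finsupp.mul_sum,
    Finsupp.sum_mul, ← Finsupp.sum_add]
  exact Finsupp.sum_congr fun kl _ => commutator_SL2a_add_SL2d_smul_monomial q hq kl.1 kl.2 _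

end Relations

namespace AddMonoidAlgebra

variable {R : Type*} [CommSemiring R]

noncomputable def gradedScale (t : R) : R[ℕ × ℕ] →ₐ[R] R[ℕ × ℕ] :=
  lift R R[ℕ × ℕ] (ℕ × ℕ)
    { toFun := fun g => single g.toAdd (t ^ (g.toAdd.1 + g.toAdd.2))
      map_one' := by simp [one_def]
      map_mul' := fun g h => by
        simp only [toAdd_mul, Prod.fst_add, Prod.snd_add, single_mul_single, single_right_inj]
        ring }

theorem gradedScale_single (t : R) (g : ℕ × ℕ) (r : R) :
    gradedScale t (single g r) = single g (t ^ (g.1 + g.2) * r) := by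
  simp [gradedScale, lift_apply, smul_single, mul_comm]

theorem coeff_gradedScale (t : R) (P : R[ℕ × ℕ]) (g : ℕ × ℕ) :
    (gradedScale t P).coeff g = t ^ (g.1 + g.2) * P.coeff g := by
  induction P using induction_linear with
  | zero => simp
  | add P P' hP hP' => simp [hP, hP', mul_add]
  | single g' r =>
    rw [gradedScale_single, coeff_single, coeff_single, Finsupp.single_apply, Finsupp.single_apply]
    split_ifs with h
    · rw [h]
    · rw [mul_zero]

theorem gradedScale_gradedScale (s t : R) (P : R[ℕ × ℕ]) :
    gradedScale s (gradedScale t P) = gradedScale (s * t) P := by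
  ext g
  simp only [coeff_gradedScale, mul_pow]
  ring

theorem gradedScale_one_apply (P : R[ℕ × ℕ]) : gradedScale 1 P = P := by
  ext g
  simp [coeff_gradedScale]

theorem eq_zero_of_gradedScale_eq_mul_one_add_single [NoZeroDivisors R] {s t : R} (ht : t ≠ 0)
    {P : R[ℕ × ℕ]} (h : gradedScale s P = P * (1 + single (1, 1) t)) : P = 0 := by
  by_contra hP
  obtain ⟨z, hz, hmax⟩ := P.coeff.support.exists_max_image Prod.fst
    (Finsupp.support_nonempty_iff.2 (coeff_eq_zero.not.2 hP))
  have hnext : P.coeff (z + (1, 1)) = 0 :=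
    Finsupp.notMem_support_iff.1 fun hmem => by simpa using hmax _ hmem
  have hcoeff := congr_arg (fun x => x.coeff (z + (1, 1))) h
  simp only [coeff_gradedScale, mul_add, mul_one, coeff_add, Finsupp.add_apply, hnext, mul_zero,
    zero_add] at hcoeff
  rw [coeff_mul_single_eq_coeff_mul z fun m _ => add_left_inj _] at hcoeff
  exact mul_ne_zero (Finsupp.mem_support_iff.1 hz) ht hcoeff.symm

end AddMonoidAlgebra

section Representation

open AddMonoidAlgebra

variable (q : ℂ)

noncomputable def SL2opA : Module.End ℂ ℂ[ℕ × ℕ] := (gradedScale q).toLinearMap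

noncomputable def SL2opB : Module.End ℂ ℂ[ℕ × ℕ] := Algebra.lmul ℂ ℂ[ℕ × ℕ] (single (1, 0) 1)

noncomputable def SL2opC : Module.End ℂ ℂ[ℕ × ℕ] := Algebra.lmul ℂ ℂ[ℕ × ℕ] (single (0, 1) 1)

noncomputable def SL2opD : Module.End ℂ ℂ[ℕ × ℕ] :=
  Algebra.lmul ℂ ℂ[ℕ × ℕ] (1 + single (1, 1) q⁻¹) * (gradedScale q⁻¹).toLinearMap

noncomputable def SL2rep (hq : q ≠ 0) : OqSL2 q →ₐ[ℂ] Module.End ℂ ℂ[ℕ × ℕ] :=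
  RingQuot.liftAlgHom ℂ ⟨FreeAlgebra.lift ℂ ![SL2opA q, SL2opB, SL2opC, SL2opD q], by
    rintro _ _ ⟨⟩ <;> refine LinearMap.ext fun P => ?_ <;>
      simp only [SL2opA, SL2opB, SL2opC, SL2opD, Algebra.coe_lmul_eq_mul, AlgHom.toLinearMap_apply,
        FreeAlgebra.lift_ι_apply, Matrix.cons_val, Matrix.cons_val_one, Matrix.cons_val_zero,
        Module.End.mul_apply, Module.End.one_apply, LinearMap.add_apply, LinearMap.sub_apply,
        LinearMap.smul_apply, LinearMap.mul_apply_apply, map_add, map_sub, map_mul, map_one,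
        map_smul, gradedScale_single, gradedScale_gradedScale, gradedScale_one_apply,
        mul_inv_cancel₀ hq, inv_mul_cancel₀ hq, pow_one, mul_one, one_mul, add_zero, zero_add, smul_add, mul_add,
        ← mul_assoc, ← smul_mul_assoc, smul_single', single_mul_single, Prod.mk_add_mk]
    case ad =>
      rw [add_assoc, ← add_mul, ← single_add, add_sub_cancel, pow_two, mul_inv_cancel_right₀ hq]
    case det => rw [pow_two, mul_inv_cancel_right₀ hq, add_sub_cancel_right]⟩

theorem SL2rep_SL2a (hq : q ≠ 0) : SL2rep q hq (SL2a q) = SL2opA q := by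
  rw [SL2a, SL2rep, RingQuot.liftAlgHom_mkAlgHom_apply, FreeAlgebra.lift_ι_apply]; rfl

theorem SL2rep_SL2b (hq : q ≠ 0) : SL2rep q hq (SL2b q) = SL2opB := by
  rw [SL2b, SL2rep, RingQuot.liftAlgHom_mkAlgHom_apply, FreeAlgebra.lift_ι_apply]; rfl

theorem SL2rep_SL2c (hq : q ≠ 0) : SL2rep q hq (SL2c q) = SL2opC := by
  rw [SL2c, SL2rep, RingQuot.liftAlgHom_mkAlgHom_apply, FreeAlgebra.lift_ι_apply]; rfl

theorem SL2rep_SL2d (hq : q ≠ 0) : SL2rep q hq (SL2d q) = SL2opD q := by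
  rw [SL2d, SL2rep, RingQuot.liftAlgHom_mkAlgHom_apply, FreeAlgebra.lift_ι_apply]; rfl

theorem SL2rep_SL2poly (hq : q ≠ 0) (g : (ℕ × ℕ) →₀ ℂ) :
    SL2rep q hq (SL2poly q g) = Algebra.lmul ℂ ℂ[ℕ × ℕ] (ofCoeff g) := by
  rw [SL2poly, map_finsuppSum, ← sum_coeff_single (ofCoeff g), coeff_ofCoeff, map_finsuppSum]
  refine Finsupp.sum_congr fun kl _ => ?_
  rw [map_smul, map_mul, map_pow, map_pow, SL2rep_SL2b q hq, SL2rep_SL2c q hq, SL2opB, SL2opC,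
    ← map_pow, ← map_pow, ← map_mul, ← map_smul, single_pow, single_pow, single_mul_single,
    smul_single']
  simp

theorem SL2poly_eq_zero_of_SL2a_mul_eq_mul_SL2d (hq : q ≠ 0) {g : (ℕ × ℕ) →₀ ℂ}
    (h : SL2a q * SL2poly q g = SL2poly q g * SL2d q) : g = 0 := by
  have h1 := congr_arg (fun T => SL2rep q hq T 1) h
  simp only [map_mul, SL2rep_SL2a, SL2rep_SL2d, SL2rep_SL2poly, SL2opA, SL2opD,
    Module.End.mul_apply, Algebra.coe_lmul_eq_mul, LinearMap.mul_apply_apply,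
    AlgHom.toLinearMap_apply, map_one, mul_one] at h1
  simpa using eq_zero_of_gradedScale_eq_mul_one_add_single (inv_ne_zero hq) h1

end Representation

theorem one_sub_zpow_neg_add_eq_zero_iff {q : ℂ} (hq : ∀ m : ℕ, m ≠ 0 → q ^ m ≠ 1) (k l : ℕ) :
    1 - q ^ (-((k : ℤ) + l)) = 0 ↔ (k, l) = (0, 0) := by
  rw [sub_eq_zero, eq_comm, ← Nat.cast_add, zpow_neg, zpow_natCast, inv_eq_one, Prod.mk.injEq,
    ← Nat.add_eq_zero_iff]
  exact ⟨fun h => by_contra fun hkl => hq _ hkl h, fun h => by rw [h, pow_zero]⟩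

theorem commute_SL2a_add_SL2d_SL2poly_iff (q : ℂ) (hq0 : q ≠ 0)
    (hq : ∀ m : ℕ, m ≠ 0 → q ^ m ≠ 1) (f : (ℕ × ℕ) →₀ ℂ) :
    (SL2a q + SL2d q) * SL2poly q f = SL2poly q f * (SL2a q + SL2d q) ↔
      ∀ kl : ℕ × ℕ, kl ≠ (0, 0) → f kl = 0 := by
  let g := Finsupp.onFinset f.support (fun kl => (1 - q ^ (-((kl.1 : ℤ) + kl.2))) * f kl)
    fun kl hkl => Finsupp.mem_support_iff.2 (right_ne_zero_of_mul hkl)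
  have hg : (f.sum fun kl coef =>
      ((1 - q ^ (-((kl.1 : ℤ) + kl.2))) * coef) • (SL2b q ^ kl.1 * SL2c q ^ kl.2)) =
        SL2poly q g := by
    rw [SL2poly, Finsupp.onFinset_sum]
    · rfl
    · exact fun _ => zero_smul ℂ _
  -- On `OqSL2 q`, `rw [neg_smul]` and `rw [neg_mul]` fail to unify the `Neg` instances, so these
  -- lemmas are applied with explicit arguments.
  have hg' : (f.sum fun kl coef =>
      ((q ^ (-((kl.1 : ℤ) + kl.2)) - 1) * coef) • (SL2b q ^ kl.1 * SL2c q ^ kl.2)) =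
        -SL2poly q g := by
    rw [← hg, ← Finsupp.sum_neg]
    refine Finsupp.sum_congr fun kl _ => ?_
    rw [← neg_sub, neg_mul]
    exact neg_smul _ (SL2b q ^ kl.1 * SL2c q ^ kl.2)
  have hcomm : (SL2a q + SL2d q) * SL2poly q f - SL2poly q f * (SL2a q + SL2d q) =
      SL2a q * SL2poly q g - SL2poly q g * SL2d q := by
    rw [commutator_SL2a_add_SL2d_SL2poly q hq0, hg, hg', sub_eq_add_neg]
    exact congrArg _ (neg_mul (SL2poly q g) (SL2d q))
  rw [← sub_eq_zero, hcomm, sub_eq_zero]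
  constructor
  · intro h kl hkl
    have hgkl : (1 - q ^ (-((kl.1 : ℤ) + kl.2))) * f kl = 0 :=
      DFunLike.congr_fun (SL2poly_eq_zero_of_SL2a_mul_eq_mul_SL2d q hq0 h) kl
    exact (mul_eq_zero.1 hgkl).resolve_left ((one_sub_zpow_neg_add_eq_zero_iff hq _ _).not.2 hkl)
  · intro hf
    have hg0 : g = 0 := Finsupp.ext fun kl => by
      by_cases hkl : kl = (0, 0)
      · simp [g, hkl]
      · simp [g, hf kl hkl]
    simp [hg0, SL2poly]

/-- In `O_q(SL_2(ℂ))`, for any polynomial `p ∈ ℂ[b,c]` with homogeneous components `p_m`,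
`[a + d, p(b,c)] = a·Σ_m (1 − q^{−m}) p_m(b,c) + Σ_m (q^{−m} − 1) p_m(b,c)·d`.
In particular, if `q` is not a root of unity, `p(b,c)` commutes with `a + d` iff `p` is
constant. -/
theorem commutator_trace_with_polynomial_bc (q : ℂ) (hq0 : q ≠ 0)
    (f : (ℕ × ℕ) →₀ ℂ) :
    let a := SL2a q; let b := SL2b q; let c := SL2c q; let d := SL2d q
    ((a + d) * SL2poly q f - SL2poly q f * (a + d) =
      a * (f.sum fun kl coef =>
            ((1 - q ^ (-((kl.1 : ℤ) + kl.2))) * coef) • (b ^ kl.1 * c ^ kl.2))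
        + (f.sum fun kl coef =>
            ((q ^ (-((kl.1 : ℤ) + kl.2)) - 1) * coef) • (b ^ kl.1 * c ^ kl.2)) * d) ∧
    ((∀ m : ℕ, m ≠ 0 → q ^ m ≠ 1) →
      ((a + d) * SL2poly q f = SL2poly q f * (a + d) ↔
        ∀ kl : ℕ × ℕ, kl ≠ (0, 0) → f kl = 0)) :=
  ⟨commutator_SL2a_add_SL2d_SL2poly q hq0 f, fun hq => commute_SL2a_add_SL2d_SL2poly_iff q hq0 hq f⟩
end
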